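/- Let U be an open subset of ℝ^d. For every α < α′ (with |α|, |α′| < r) and p, q, s ∈ [1,∞], the embedding B^{α′,loc}_{p,q}(U) ⊂ B^{α,loc}_{p,s}(U) is compact: every bounded sequence in B^{α′,loc}_{p,q}(U) has a subsequence converging in B^{α,loc}_{p,s}(U). -/

import Mathlib

open MeasureTheory ENNReal Filter Metric Topology

noncomputable section

/-- `2^{dn/2} f(2^n(· - x))`. -/
def wsc (d : ℕ) (f : (Fin d → ℝ) → ℝ) (n : ℤ) (x : Fin d → ℝ) : (Fin d → ℝ) → ℝ :=
  fun y => (2 : ℝ) ^ (((d : ℝ) * (n : ℝ)) / 2) * f (fun j => (2 : ℝ) ^ n * (y j - x j))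

/-- the point of the lattice `Λ_n = 2^{-n} ℤ^d` indexed by `k`. -/
def latPt (d : ℕ) (n : ℤ) (k : Fin d → ℤ) : Fin d → ℝ :=
  fun j => (k j : ℝ) * (2 : ℝ) ^ (-n)

/-- `ℓ^p` norm, `ℝ≥0∞`-valued, of a family of `ℝ≥0∞`. -/
def lpS {ι : Type*} (p : ℝ≥0∞) (u : ι → ℝ≥0∞) : ℝ≥0∞ :=
  if p = ∞ then ⨆ i, u i else (∑' i, u i ^ p.toReal) ^ (1 / p.toReal)

/-- `2^t` as an element of `ℝ≥0∞`. -/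
def twoPow (t : ℝ) : ℝ≥0∞ := ENNReal.ofReal ((2 : ℝ) ^ t)

/-- wavelet projection on `V_n`. -/
def Vproj (d : ℕ) (φ : (Fin d → ℝ) → ℝ) (n : ℤ) (f : (Fin d → ℝ) → ℝ) :
    (Fin d → ℝ) → ℝ :=
  fun y => ∑' k : Fin d → ℤ,
    (∫ z, f z * wsc d φ n (latPt d n k) z) * wsc d φ n (latPt d n k) y

/-- wavelet projection on `W_n`. -/
def Wproj (d : ℕ) (ψ : Fin (2 ^ d - 1) → (Fin d → ℝ) → ℝ) (n : ℤ)
    (f : (Fin d → ℝ) → ℝ) : (Fin d → ℝ) → ℝ :=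
  fun y => ∑' v : Fin (2 ^ d - 1) × (Fin d → ℤ),
    (∫ z, f z * wsc d (ψ v.1) n (latPt d n v.2) z) * wsc d (ψ v.1) n (latPt d n v.2) y

/-- The Besov norm `‖f‖_{B^α_{p,q}}`. -/
def besovNorm (d : ℕ) (φ : (Fin d → ℝ) → ℝ) (ψ : Fin (2 ^ d - 1) → (Fin d → ℝ) → ℝ)
    (α : ℝ) (p q : ℝ≥0∞) (f : (Fin d → ℝ) → ℝ) : ℝ≥0∞ :=
  eLpNorm (Vproj d φ 0 f) p volume +
    lpS q (fun n : ℕ => twoPow (α * n) * eLpNorm (Wproj d ψ n f) p volume)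

/-- local scaling-coefficient norm `v_{n,K,p}` of a linear form. -/
def vK (d : ℕ) (φ : (Fin d → ℝ) → ℝ) (F : ((Fin d → ℝ) → ℝ) → ℝ) (n : ℤ)
    (K : Set (Fin d → ℝ)) (p : ℝ≥0∞) : ℝ≥0∞ :=
  twoPow ((d : ℝ) * (n : ℝ) * (2⁻¹ - p⁻¹.toReal)) *
    lpS p (fun k : {k : Fin d → ℤ // latPt d n k ∈ K} =>
      ENNReal.ofReal |F (wsc d φ n (latPt d n k.1))|)

/-- local wavelet-coefficient norm `w_{n,K,p}` of a linear form. -/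
def wK (d : ℕ) (ψ : Fin (2 ^ d - 1) → (Fin d → ℝ) → ℝ) (F : ((Fin d → ℝ) → ℝ) → ℝ)
    (n : ℤ) (K : Set (Fin d → ℝ)) (p : ℝ≥0∞) : ℝ≥0∞ :=
  twoPow ((d : ℝ) * (n : ℝ) * (2⁻¹ - p⁻¹.toReal)) *
    lpS p (fun v : Fin (2 ^ d - 1) × {k : Fin d → ℤ // latPt d n k ∈ K} =>
      ENNReal.ofReal |F (wsc d (ψ v.1) n (latPt d n v.2.1))|)

/-- The local norm `‖f‖_{B^{α,K,k}_{p,q}}`. -/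
def locNorm (d : ℕ) (φ : (Fin d → ℝ) → ℝ) (ψ : Fin (2 ^ d - 1) → (Fin d → ℝ) → ℝ)
    (α : ℝ) (K : Set (Fin d → ℝ)) (k : ℕ) (p q : ℝ≥0∞)
    (F : ((Fin d → ℝ) → ℝ) → ℝ) : ℝ≥0∞ :=
  vK d φ F k K p +
    lpS q (fun n : {n : ℕ // k ≤ n} => twoPow (α * (n : ℕ)) * wK d ψ F n K p)

/-- An adapted pair `(K, k)` in the open set `U`: `K ⊆ U` compact with
`2^{-k} R < dist(K, U^c)`. -/
def Adapted (d : ℕ) (U : Set (Fin d → ℝ)) (R : ℝ) (K : Set (Fin d → ℝ)) (k : ℕ) : Prop :=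
  IsCompact K ∧ K ⊆ U ∧ ∀ x ∈ K, ∀ y ∉ U, (2 : ℝ) ^ (-(k : ℤ)) * R < dist x y

/-- the pairing of (the extension by zero of) a function `g` defined on `U` with a test
function. -/
def pairOn (d : ℕ) (U : Set (Fin d → ℝ)) (g : (Fin d → ℝ) → ℝ) :
    ((Fin d → ℝ) → ℝ) → ℝ :=
  fun η => ∫ y in U, g y * η y

/-- difference of two linear forms. -/
def subForm (d : ℕ) (F G : ((Fin d → ℝ) → ℝ) → ℝ) : ((Fin d → ℝ) → ℝ) → ℝ :=
  fun η => F η - G η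

/-- Convergence in the local Besov space `B^{α,loc}_{p,q}(U)`: all the seminorms
`‖·‖_{B^{α,K,k}_{p,q}}`, `(K,k)` adapted, of the difference tend to `0`. -/
def TendstoLocBesov (d : ℕ) (φ : (Fin d → ℝ) → ℝ) (ψ : Fin (2 ^ d - 1) → (Fin d → ℝ) → ℝ)
    (α : ℝ) (p q : ℝ≥0∞) (U : Set (Fin d → ℝ)) (R : ℝ)
    (F : ℕ → ((Fin d → ℝ) → ℝ) → ℝ) (G : ((Fin d → ℝ) → ℝ) → ℝ) : Prop :=
  ∀ K k, Adapted d U R K k →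
    Tendsto (fun N => locNorm d φ ψ α K k p q (subForm d (F N) G)) atTop (𝓝 0)

/-- Membership in `B^{α,loc}_{p,q}(U)` (defined as the completion of `C^∞(U)` for the
seminorms): a linear form belongs to the space if it is the limit of a sequence of smooth
functions on `U` in all the local seminorms. -/
def MemBesovLoc (d : ℕ) (φ : (Fin d → ℝ) → ℝ) (ψ : Fin (2 ^ d - 1) → (Fin d → ℝ) → ℝ)
    (α : ℝ) (p q : ℝ≥0∞) (U : Set (Fin d → ℝ)) (R : ℝ)
    (F : ((Fin d → ℝ) → ℝ) → ℝ) : Prop :=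
  ∃ g : ℕ → (Fin d → ℝ) → ℝ, (∀ N, ContDiffOn ℝ (⊤ : ℕ∞) (g N) U) ∧
    TendstoLocBesov d φ ψ α p q U R (fun N => pairOn d U (g N)) F

/-- A linear form on `C^r_c(U)`. -/
def IsLinearFormOn (d : ℕ) (U : Set (Fin d → ℝ)) (r : ℕ) (F : ((Fin d → ℝ) → ℝ) → ℝ) : Prop :=
  ∀ (c : ℝ) (η η' : (Fin d → ℝ) → ℝ),
    ContDiff ℝ (r : ℕ∞) η → HasCompactSupport η → tsupport η ⊆ U →
    ContDiff ℝ (r : ℕ∞) η' → HasCompactSupport η' → tsupport η' ⊆ U →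
    F (c • η + η') = c * F η + F η'



section Stmt10Aux

variable {ι κ : Type*}

-- ### twoPow lemmas

theorem twoPow_pos (t : ℝ) : 0 < twoPow t :=
  ENNReal.ofReal_pos.2 (Real.rpow_pos_of_pos two_pos t)

theorem twoPow_ne_zero (t : ℝ) : twoPow t ≠ 0 := (twoPow_pos t).ne'

theorem twoPow_ne_top (t : ℝ) : twoPow t ≠ ⊤ := ENNReal.ofReal_ne_top

theorem twoPow_add (a b : ℝ) : twoPow (a + b) = twoPow a * twoPow b := by
  unfold twoPow
  rw [Real.rpow_add two_pos, ENNReal.ofReal_mul (Real.rpow_nonneg (by norm_num) a)]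

theorem twoPow_zero : twoPow 0 = 1 := by
  unfold twoPow; rw [Real.rpow_zero]; exact ENNReal.ofReal_one

theorem twoPow_neg_mul (t : ℝ) : twoPow (-t) * twoPow t = 1 := by
  rw [← twoPow_add, neg_add_cancel, twoPow_zero]

theorem twoPow_mul_neg (t : ℝ) : twoPow t * twoPow (-t) = 1 := by
  rw [← twoPow_add, add_neg_cancel, twoPow_zero]

theorem twoPow_le_twoPow {a b : ℝ} (h : a ≤ b) : twoPow a ≤ twoPow b :=
  ENNReal.ofReal_le_ofReal (Real.rpow_le_rpow_of_exponent_le one_le_two h)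

theorem twoPow_le_one {t : ℝ} (h : t ≤ 0) : twoPow t ≤ 1 := by
  rw [← twoPow_zero]; exact twoPow_le_twoPow h

/-- cancel: from `twoPow c * a ≤ b` conclude `a ≤ twoPow (-c) * b`. -/
theorem le_twoPow_neg_mul_of_twoPow_mul_le {c : ℝ} {a b : ℝ≥0∞}
    (h : twoPow c * a ≤ b) : a ≤ twoPow (-c) * b := by
  calc a = (twoPow (-c) * twoPow c) * a := by rw [twoPow_neg_mul, one_mul]
  _ = twoPow (-c) * (twoPow c * a) := by ring
  _ ≤ twoPow (-c) * b := by exact mul_le_mul_right h _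

theorem twoPow_nat_mul (c : ℝ) (N : ℕ) : twoPow (c * N) = twoPow c ^ N := by
  induction N with
  | zero => simp [twoPow_zero]
  | succ n ih =>
    have : c * ((n : ℝ) + 1) = c * n + c := by ring
    rw [Nat.cast_succ, this, twoPow_add, ih, pow_succ]

theorem twoPow_lt_one {t : ℝ} (h : t < 0) : twoPow t < 1 :=
  ENNReal.ofReal_lt_one.2 (Real.rpow_lt_one_of_one_lt_of_neg one_lt_two h)

theorem twoPow_rpow {t : ℝ} {a : ℝ} : twoPow t ^ a = twoPow (t * a) := by
  unfold twoPow
  rw [ENNReal.ofReal_rpow_of_pos (Real.rpow_pos_of_pos two_pos t),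
    ← Real.rpow_mul (by norm_num)]

end Stmt10Aux
section Stmt10Aux2

variable {ι κ : Type*}

theorem lpS_top (f : ι → ℝ≥0∞) : lpS ∞ f = ⨆ i, f i := if_pos rfl

theorem lpS_ne_top {p : ℝ≥0∞} (hp : p ≠ ∞) (f : ι → ℝ≥0∞) :
    lpS p f = (∑' i, f i ^ p.toReal) ^ (1 / p.toReal) := if_neg hp

theorem toReal_pos_of_one_le {p : ℝ≥0∞} (hp : 1 ≤ p) (hp' : p ≠ ∞) : 0 < p.toReal :=
  lt_of_lt_of_le one_pos (ENNReal.toReal_one ▸ ENNReal.toReal_mono hp' hp)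

/-- single term is at most the `ℓ^p` norm. -/
theorem le_lpS {p : ℝ≥0∞} (hp : 1 ≤ p) (f : ι → ℝ≥0∞) (i : ι) : f i ≤ lpS p f := by
  by_cases hp' : p = ∞
  · subst hp'; rw [lpS_top]; exact le_iSup f i
  · rw [lpS_ne_top hp']
    have hpr := toReal_pos_of_one_le hp hp'
    calc f i = (f i ^ p.toReal) ^ (1 / p.toReal) := by
          rw [← ENNReal.rpow_mul, mul_one_div, div_self hpr.ne', ENNReal.rpow_one]
      _ ≤ (∑' j, f j ^ p.toReal) ^ (1 / p.toReal) :=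
          ENNReal.rpow_le_rpow (ENNReal.le_tsum i) (by positivity)

theorem lpS_mono {p : ℝ≥0∞} {f g : ι → ℝ≥0∞} (h : ∀ i, f i ≤ g i) : lpS p f ≤ lpS p g := by
  unfold lpS
  split
  · exact iSup_mono h
  · refine ENNReal.rpow_le_rpow (ENNReal.tsum_le_tsum fun i => ?_) (by positivity)
    exact ENNReal.rpow_le_rpow (h i) ENNReal.toReal_nonneg

theorem lpS_const_mul {p : ℝ≥0∞} (hp : 1 ≤ p) (c : ℝ≥0∞) (f : ι → ℝ≥0∞) :
    lpS p (fun i => c * f i) = c * lpS p f := by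
  by_cases hp' : p = ∞
  · subst hp'; rw [lpS_top, lpS_top, ENNReal.mul_iSup]
  · rw [lpS_ne_top hp', lpS_ne_top hp']
    have hpr := toReal_pos_of_one_le hp hp'
    have : ∀ i, (c * f i) ^ p.toReal = c ^ p.toReal * f i ^ p.toReal := fun i =>
      ENNReal.mul_rpow_of_nonneg _ _ ENNReal.toReal_nonneg
    simp_rw [this]
    rw [ENNReal.tsum_mul_left,
      ENNReal.mul_rpow_of_nonneg _ _ (by positivity : (0:ℝ) ≤ 1 / p.toReal),
      ← ENNReal.rpow_mul, mul_one_div, div_self hpr.ne', ENNReal.rpow_one]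

/-- Minkowski inequality for `lpS`. -/
theorem lpS_add_le {p : ℝ≥0∞} (hp : 1 ≤ p) (f g : ι → ℝ≥0∞) :
    lpS p (fun i => f i + g i) ≤ lpS p f + lpS p g := by
  by_cases hp' : p = ∞
  · subst hp'; rw [lpS_top, lpS_top, lpS_top]
    exact iSup_le fun i => add_le_add (le_iSup f i) (le_iSup g i)
  · rw [lpS_ne_top hp', lpS_ne_top hp', lpS_ne_top hp']
    have hpr : 1 ≤ p.toReal := ENNReal.toReal_one ▸ ENNReal.toReal_mono hp' hp
    letI : MeasurableSpace ι := ⊤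
    haveI : MeasurableSingletonClass ι := ⟨fun _ => trivial⟩
    have hmf : AEMeasurable f (MeasureTheory.Measure.count : MeasureTheory.Measure ι) :=
      (Measurable.of_comap_le le_top).aemeasurable
    have hmg : AEMeasurable g (MeasureTheory.Measure.count : MeasureTheory.Measure ι) :=
      (Measurable.of_comap_le le_top).aemeasurable
    have := ENNReal.lintegral_Lp_add_le hmf hmg hpr
    simpa only [MeasureTheory.lintegral_count, Pi.add_apply] using this

/-- `ℓ^p ⊆ ℓ^1` type bound: `lpS p f ≤ ∑' f` for `p ≥ 1`. -/
theorem lpS_le_tsum {p : ℝ≥0∞} (hp : 1 ≤ p) (f : ι → ℝ≥0∞) : lpS p f ≤ ∑' i, f i := by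
  by_cases hp' : p = ∞
  · subst hp'; rw [lpS_top]; exact iSup_le fun i => ENNReal.le_tsum i
  · rw [lpS_ne_top hp']
    have hpr := toReal_pos_of_one_le hp hp'
    set S := ∑' i, f i with hS
    rcases eq_or_ne S 0 with h0 | h0
    · have : ∀ i, f i = 0 := by
        intro i
        exact le_antisymm (h0 ▸ ENNReal.le_tsum i) (zero_le)
      simp only [this]
      rw [ENNReal.zero_rpow_of_pos hpr, tsum_zero,
        ENNReal.zero_rpow_of_pos (by positivity), h0]
    rcases eq_or_ne S ⊤ with htop | htop
    · rw [htop]; exact le_top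
    have key : ∑' i, f i ^ p.toReal ≤ S ^ p.toReal := by
      have : ∀ i, f i ^ p.toReal ≤ f i * S ^ (p.toReal - 1) := by
        intro i
        have h1 : f i ^ p.toReal = f i ^ (1 : ℝ) * f i ^ (p.toReal - 1) := by
          rcases eq_or_ne (f i) 0 with h | h
          · rw [h, ENNReal.zero_rpow_of_pos hpr, ENNReal.rpow_one, zero_mul]
          · rw [← ENNReal.rpow_add _ _ h (lt_of_le_of_lt (ENNReal.le_tsum i) (lt_top_iff_ne_top.2 htop)).ne]
            norm_num
        rw [h1, ENNReal.rpow_one]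
        refine mul_le_mul_right (ENNReal.rpow_le_rpow (ENNReal.le_tsum i) ?_) _
        linarith [ENNReal.toReal_one ▸ ENNReal.toReal_mono hp' hp]
      calc ∑' i, f i ^ p.toReal ≤ ∑' i, f i * S ^ (p.toReal - 1) := ENNReal.tsum_le_tsum this
        _ = S * S ^ (p.toReal - 1) := ENNReal.tsum_mul_right
        _ = S ^ (1:ℝ) * S ^ (p.toReal - 1) := by rw [ENNReal.rpow_one]
        _ = S ^ p.toReal := by
            rw [← ENNReal.rpow_add _ _ h0 htop]
            norm_num
    calc (∑' i, f i ^ p.toReal) ^ (1 / p.toReal) ≤ (S ^ p.toReal) ^ (1 / p.toReal) :=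
          ENNReal.rpow_le_rpow key (by positivity)
      _ = S := by rw [← ENNReal.rpow_mul, mul_one_div, div_self hpr.ne', ENNReal.rpow_one]

/-- `lpS` along an injection. -/
theorem lpS_le_of_inj {p : ℝ≥0∞} (e : ι → κ) (he : Function.Injective e)
    {f : ι → ℝ≥0∞} {g : κ → ℝ≥0∞} (h : ∀ i, f i ≤ g (e i)) : lpS p f ≤ lpS p g := by
  unfold lpS
  split
  · exact iSup_le fun i => (h i).trans (le_iSup g (e i))
  · refine ENNReal.rpow_le_rpow ?_ (by positivity)
    calc ∑' i, f i ^ p.toReal ≤ ∑' i, g (e i) ^ p.toReal :=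
          ENNReal.tsum_le_tsum fun i => ENNReal.rpow_le_rpow (h i) ENNReal.toReal_nonneg
      _ ≤ ∑' j, g j ^ p.toReal := tsum_comp_le_tsum_of_injective he _

/-- restrict `lpS` to a set containing the support. -/
theorem lpS_le_subtype {p : ℝ≥0∞} (hp : 1 ≤ p) (f : ι → ℝ≥0∞) (s : Set ι)
    (hs : ∀ i, f i ≠ 0 → i ∈ s) : lpS p f ≤ lpS p (fun x : s => f x) := by
  by_cases hp' : p = ∞
  · subst hp'; rw [lpS_top, lpS_top]
    refine iSup_le fun i => ?_
    rcases eq_or_ne (f i) 0 with h | h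
    · rw [h]; exact zero_le
    · exact le_iSup (fun x : s => f x) ⟨i, hs i h⟩
  · rw [lpS_ne_top hp', lpS_ne_top hp']
    have hpr := toReal_pos_of_one_le hp hp'
    refine ENNReal.rpow_le_rpow ?_ (by positivity)
    have : ∑' x : s, f (x:ι) ^ p.toReal = ∑' i, f i ^ p.toReal := by
      refine tsum_subtype_eq_of_support_subset (f := fun i => f i ^ p.toReal) (s := s) ?_
      intro i hi
      refine hs i fun h0 => hi ?_
      simp only [Function.mem_support, h0, ne_eq, not_not]
      exact ENNReal.zero_rpow_of_pos hpr
    rw [← this]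

end Stmt10Aux2
section Stmt10Aux3

variable {ι κ : Type*}

theorem lpS_geometric_ne_top {c : ℝ} (hc : c < 0) {s : ℝ≥0∞} (hs : 1 ≤ s) :
    lpS s (fun n : ℕ => twoPow (c * n)) ≠ ⊤ := by
  by_cases hs' : s = ∞
  · subst hs'; rw [lpS_top]
    refine ne_top_of_le_ne_top ENNReal.one_ne_top (iSup_le fun n => twoPow_le_one ?_)
    have : (0:ℝ) ≤ (n:ℝ) := Nat.cast_nonneg n
    nlinarith
  · rw [lpS_ne_top hs']
    have hsr := toReal_pos_of_one_le hs hs'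
    have hpt : ∀ n : ℕ, twoPow (c * n) ^ s.toReal = twoPow (c * s.toReal) ^ n := by
      intro n
      rw [twoPow_rpow, ← twoPow_nat_mul]
      ring_nf
    simp_rw [hpt]
    rw [ENNReal.tsum_geometric]
    refine ENNReal.rpow_ne_top_of_nonneg (by positivity) ?_
    simp only [ne_eq, ENNReal.inv_eq_top, tsub_eq_zero_iff_le, not_le]
    exact twoPow_lt_one (by nlinarith)

theorem lpS_tail_le {c : ℝ} {s : ℝ≥0∞} (hs : 1 ≤ s) (N : ℕ) :
    lpS s (fun n : {n : ℕ // N ≤ n} => twoPow (c * (n : ℕ)))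
      ≤ twoPow (c * N) * lpS s (fun m : ℕ => twoPow (c * m)) := by
  have hfun : (fun n : {n : ℕ // N ≤ n} => twoPow (c * (n : ℕ)))
      = fun n : {n : ℕ // N ≤ n} => twoPow (c * N) * twoPow (c * (((n : ℕ) - N : ℕ) : ℝ)) := by
    funext n
    rw [← twoPow_add]
    congr 1
    have : (((n : ℕ) - N : ℕ) : ℝ) = ((n : ℕ) : ℝ) - (N : ℝ) := by
      rw [Nat.cast_sub n.2]
    rw [this]; ring
  rw [hfun, lpS_const_mul hs]
  refine mul_le_mul_right ?_ _
  exact lpS_le_of_inj (fun n : {n : ℕ // N ≤ n} => (n : ℕ) - N)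
    (fun a b hab => Subtype.ext (by
      have h2 := a.2; have h3 := b.2; simp only at hab; omega)) (fun i => le_rfl)

theorem tendsto_twoPow_atTop_zero {c : ℝ} (hc : c < 0) :
    Filter.Tendsto (fun N : ℕ => twoPow (c * N)) Filter.atTop (nhds 0) := by
  simp_rw [twoPow_nat_mul]
  exact ENNReal.tendsto_pow_atTop_nhds_zero_of_lt_one (twoPow_lt_one hc)

theorem latticeFinite (d : ℕ) (n : ℤ) {K : Set (Fin d → ℝ)} (hK : IsCompact K) :
    {k : Fin d → ℤ | latPt d n k ∈ K}.Finite := by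
  obtain ⟨C, hC⟩ := (Metric.isBounded_iff_subset_closedBall 0).1 hK.isBounded
  set B : ℤ := ⌈C * (2 : ℝ) ^ (n : ℤ)⌉
  refine Set.Finite.subset (Set.finite_Icc (fun _ : Fin d => -B) (fun _ => B)) ?_
  intro k hk
  have hmem : latPt d n k ∈ Metric.closedBall (0 : Fin d → ℝ) C := hC hk
  have hco : ∀ j, |(k j : ℝ)| ≤ C * (2 : ℝ) ^ (n : ℤ) := by
    intro j
    have h1 : dist (latPt d n k j) ((0 : Fin d → ℝ) j) ≤ dist (latPt d n k) (0 : Fin d → ℝ) :=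
      dist_le_pi_dist _ _ j
    have h2 : dist (latPt d n k) (0 : Fin d → ℝ) ≤ C := Metric.mem_closedBall.1 hmem
    have hpow : (0:ℝ) < (2:ℝ) ^ (-n) := zpow_pos two_pos _
    have hdist : dist (latPt d n k j) ((0 : Fin d → ℝ) j) = |(k j : ℝ)| * (2:ℝ) ^ (-n) := by
      simp [latPt, Real.dist_eq, abs_mul, abs_of_pos hpow]
    rw [hdist] at h1
    have h3 : |(k j : ℝ)| * (2:ℝ) ^ (-n) ≤ C := h1.trans h2
    have := mul_le_mul_of_nonneg_right h3 (le_of_lt (zpow_pos two_pos n : (0:ℝ) < (2:ℝ)^n))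
    calc |(k j : ℝ)| = |(k j : ℝ)| * (2:ℝ) ^ (-n) * (2:ℝ) ^ n := by
          rw [mul_assoc, ← zpow_add₀ (two_ne_zero (α := ℝ))]
          simp
      _ ≤ C * (2:ℝ) ^ n := this
  rw [Set.mem_Icc]
  constructor <;> (intro j; simp only [Pi.neg_apply]) <;>
  · have := hco j
    have hB : C * (2 : ℝ) ^ (n : ℤ) ≤ (B : ℝ) := Int.le_ceil _
    rw [abs_le] at this
    have h1 : -(B:ℝ) ≤ (k j : ℝ) := by linarith
    have h2 : (k j : ℝ) ≤ (B:ℝ) := by linarith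
    first
      | exact_mod_cast h1
      | exact_mod_cast h2

end Stmt10Aux3
section Stmt10Aux4

variable {d : ℕ} {φ : (Fin d → ℝ) → ℝ} {ψ : Fin (2 ^ d - 1) → (Fin d → ℝ) → ℝ}
variable {p q : ℝ≥0∞} {K : Set (Fin d → ℝ)}

/-- coefficient-wise comparison for `wK`. -/
theorem wK_le_add (hp : 1 ≤ p) {F G H : ((Fin d → ℝ) → ℝ) → ℝ} {n : ℤ}
    (hc : ∀ η, |F η| ≤ |G η| + |H η|) :
    wK d ψ F n K p ≤ wK d ψ G n K p + wK d ψ H n K p := by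
  unfold wK
  rw [← mul_add]
  refine mul_le_mul_right ?_ _
  calc lpS p (fun v : Fin (2 ^ d - 1) × {k : Fin d → ℤ // latPt d n k ∈ K} =>
        ENNReal.ofReal |F (wsc d (ψ v.1) n (latPt d n v.2.1))|)
      ≤ lpS p (fun v : Fin (2 ^ d - 1) × {k : Fin d → ℤ // latPt d n k ∈ K} =>
        ENNReal.ofReal |G (wsc d (ψ v.1) n (latPt d n v.2.1))| +
        ENNReal.ofReal |H (wsc d (ψ v.1) n (latPt d n v.2.1))|) := by
        refine lpS_mono fun v => ?_
        rw [← ENNReal.ofReal_add (abs_nonneg _) (abs_nonneg _)]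
        exact ENNReal.ofReal_le_ofReal (hc _)
    _ ≤ _ := lpS_add_le hp _ _

theorem vK_le_add (hp : 1 ≤ p) {F G H : ((Fin d → ℝ) → ℝ) → ℝ} {n : ℤ}
    (hc : ∀ η, |F η| ≤ |G η| + |H η|) :
    vK d φ F n K p ≤ vK d φ G n K p + vK d φ H n K p := by
  unfold vK
  rw [← mul_add]
  refine mul_le_mul_right ?_ _
  calc lpS p (fun k : {k : Fin d → ℤ // latPt d n k ∈ K} =>
        ENNReal.ofReal |F (wsc d φ n (latPt d n k.1))|)
      ≤ lpS p (fun k : {k : Fin d → ℤ // latPt d n k ∈ K} =>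
        ENNReal.ofReal |G (wsc d φ n (latPt d n k.1))| +
        ENNReal.ofReal |H (wsc d φ n (latPt d n k.1))|) := by
        refine lpS_mono fun v => ?_
        rw [← ENNReal.ofReal_add (abs_nonneg _) (abs_nonneg _)]
        exact ENNReal.ofReal_le_ofReal (hc _)
    _ ≤ _ := lpS_add_le hp _ _

theorem subForm_abs_triangle (F G H : ((Fin d → ℝ) → ℝ) → ℝ) (η : (Fin d → ℝ) → ℝ) :
    |subForm d F H η| ≤ |subForm d F G η| + |subForm d G H η| := by
  unfold subForm
  exact abs_sub_le _ _ _

theorem abs_le_abs_add_subForm (F G : ((Fin d → ℝ) → ℝ) → ℝ) (η : (Fin d → ℝ) → ℝ) :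
    |G η| ≤ |F η| + |subForm d F G η| := by
  unfold subForm
  calc |G η| = |F η - (F η - G η)| := by ring_nf
    _ ≤ |F η| + |F η - G η| := abs_sub _ _

/-- triangle inequality for the local seminorms. -/
theorem locNorm_triangle {α : ℝ} {k : ℕ} (hp : 1 ≤ p) (hq : 1 ≤ q)
    (F G H : ((Fin d → ℝ) → ℝ) → ℝ) :
    locNorm d φ ψ α K k p q (subForm d F H) ≤
      locNorm d φ ψ α K k p q (subForm d F G) + locNorm d φ ψ α K k p q (subForm d G H) := by
  unfold locNorm
  rw [add_add_add_comm]
  refine add_le_add (vK_le_add hp (subForm_abs_triangle F G H)) ?_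
  calc lpS q (fun n : {n : ℕ // k ≤ n} => twoPow (α * (n : ℕ)) * wK d ψ (subForm d F H) n K p)
      ≤ lpS q (fun n : {n : ℕ // k ≤ n} =>
          twoPow (α * (n : ℕ)) * wK d ψ (subForm d F G) n K p +
          twoPow (α * (n : ℕ)) * wK d ψ (subForm d G H) n K p) := by
        refine lpS_mono fun n => ?_
        rw [← mul_add]
        exact mul_le_mul_right (wK_le_add hp (subForm_abs_triangle F G H)) _
    _ ≤ _ := lpS_add_le hq _ _

theorem vK_le_locNorm {α : ℝ} {k : ℕ} (F : ((Fin d → ℝ) → ℝ) → ℝ) :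
    vK d φ F k K p ≤ locNorm d φ ψ α K k p q F := self_le_add_right _ _

theorem lpSq_le_locNorm {α : ℝ} {k : ℕ} (F : ((Fin d → ℝ) → ℝ) → ℝ) :
    lpS q (fun n : {n : ℕ // k ≤ n} => twoPow (α * (n : ℕ)) * wK d ψ F n K p) ≤
      locNorm d φ ψ α K k p q F := le_add_self

theorem wK_le_locNorm {α' : ℝ} {k : ℕ} (hq : 1 ≤ q) (F : ((Fin d → ℝ) → ℝ) → ℝ)
    {n : ℕ} (hn : k ≤ n) :
    wK d ψ F n K p ≤ twoPow (-(α' * n)) * locNorm d φ ψ α' K k p q F := by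
  refine le_twoPow_neg_mul_of_twoPow_mul_le ?_
  calc twoPow (α' * n) * wK d ψ F n K p
      ≤ lpS q (fun m : {m : ℕ // k ≤ m} => twoPow (α' * (m : ℕ)) * wK d ψ F m K p) := by
        have h := le_lpS hq
          (fun m : {m : ℕ // k ≤ m} => twoPow (α' * (m : ℕ)) * wK d ψ F m K p) ⟨n, hn⟩
        simpa using h
    _ ≤ _ := lpSq_le_locNorm F

/-- single wavelet coefficient bounded by the local norm. -/
theorem coeffW_le_locNorm {α' : ℝ} {k₀ : ℕ} (hp : 1 ≤ p) (hq : 1 ≤ q)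
    (F : ((Fin d → ℝ) → ℝ) → ℝ) {n : ℕ} (hn : k₀ ≤ n) (i : Fin (2 ^ d - 1))
    {k : Fin d → ℤ} (hk : latPt d (n : ℤ) k ∈ K) :
    ENNReal.ofReal |F (wsc d (ψ i) n (latPt d n k))| ≤
      twoPow (-((d : ℝ) * ((n : ℤ) : ℝ) * (2⁻¹ - p⁻¹.toReal))) *
        (twoPow (-(α' * n)) * locNorm d φ ψ α' K k₀ p q F) := by
  refine le_twoPow_neg_mul_of_twoPow_mul_le ?_
  calc twoPow ((d : ℝ) * ((n : ℤ) : ℝ) * (2⁻¹ - p⁻¹.toReal)) *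
        ENNReal.ofReal |F (wsc d (ψ i) n (latPt d n k))|
      ≤ wK d ψ F n K p := by
        unfold wK
        exact mul_le_mul_right (le_lpS hp _ (⟨i, ⟨k, hk⟩⟩ :
          Fin (2 ^ d - 1) × {k : Fin d → ℤ // latPt d (n : ℤ) k ∈ K})) _
    _ ≤ _ := wK_le_locNorm hq F hn

/-- single scaling coefficient bounded by the local norm. -/
theorem coeffV_le_locNorm {α' : ℝ} {k₀ : ℕ} (hp : 1 ≤ p)
    (F : ((Fin d → ℝ) → ℝ) → ℝ) {k : Fin d → ℤ} (hk : latPt d (k₀ : ℤ) k ∈ K) :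
    ENNReal.ofReal |F (wsc d φ k₀ (latPt d k₀ k))| ≤
      twoPow (-((d : ℝ) * ((k₀ : ℤ) : ℝ) * (2⁻¹ - p⁻¹.toReal))) *
        locNorm d φ ψ α' K k₀ p q F := by
  refine le_twoPow_neg_mul_of_twoPow_mul_le ?_
  calc twoPow ((d : ℝ) * ((k₀ : ℤ) : ℝ) * (2⁻¹ - p⁻¹.toReal)) *
        ENNReal.ofReal |F (wsc d φ k₀ (latPt d k₀ k))|
      ≤ vK d φ F k₀ K p := by
        unfold vK
        exact mul_le_mul_right (le_lpS hp _ (⟨k, hk⟩ :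
          {k : Fin d → ℤ // latPt d (k₀ : ℤ) k ∈ K})) _
    _ ≤ _ := vK_le_locNorm F

/-- `lpS` of finitely many sequences each tending to `0` tends to `0`. -/
theorem tendsto_lpS_zero {ι : Type*} [Finite ι] (hp : 1 ≤ p) {f : ℕ → ι → ℝ≥0∞}
    (h : ∀ i, Filter.Tendsto (fun j => f j i) Filter.atTop (nhds 0)) :
    Filter.Tendsto (fun j => lpS p (f j)) Filter.atTop (nhds 0) := by
  haveI := Fintype.ofFinite ι
  have hsum : Filter.Tendsto (fun j => ∑ i : ι, f j i) Filter.atTop (nhds 0) := by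
    have := tendsto_finset_sum (f := fun i j => f j i) (a := fun _ => (0 : ℝ≥0∞))
      Finset.univ (fun i _ => h i)
    simpa using this
  refine tendsto_of_tendsto_of_tendsto_of_le_of_le tendsto_const_nhds hsum
    (fun j => zero_le) (fun j => ?_)
  calc lpS p (f j) ≤ ∑' i, f j i := lpS_le_tsum hp _
    _ = ∑ i : ι, f j i := tsum_fintype _

theorem wK_tendsto_zero (hp : 1 ≤ p) (hK : IsCompact K) {n : ℤ}
    {Fj : ℕ → ((Fin d → ℝ) → ℝ) → ℝ}
    (hc : ∀ (i : Fin (2 ^ d - 1)) (k : Fin d → ℤ), latPt d n k ∈ K →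
      Filter.Tendsto (fun j => ENNReal.ofReal |Fj j (wsc d (ψ i) n (latPt d n k))|)
        Filter.atTop (nhds 0)) :
    Filter.Tendsto (fun j => wK d ψ (Fj j) n K p) Filter.atTop (nhds 0) := by
  haveI : Finite {k : Fin d → ℤ // latPt d n k ∈ K} := (latticeFinite d n hK).to_subtype
  unfold wK
  have := ENNReal.Tendsto.const_mul
    (a := twoPow ((d : ℝ) * (n : ℝ) * (2⁻¹ - p⁻¹.toReal)))
    (tendsto_lpS_zero hp (f := fun j (v : Fin (2 ^ d - 1) × {k : Fin d → ℤ // latPt d n k ∈ K})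
      => ENNReal.ofReal |Fj j (wsc d (ψ v.1) n (latPt d n v.2.1))|)
      (fun v => hc v.1 v.2.1 v.2.2)) (Or.inr (twoPow_ne_top _))
  simpa using this

theorem vK_tendsto_zero (hp : 1 ≤ p) (hK : IsCompact K) {n : ℤ}
    {Fj : ℕ → ((Fin d → ℝ) → ℝ) → ℝ}
    (hc : ∀ (k : Fin d → ℤ), latPt d n k ∈ K →
      Filter.Tendsto (fun j => ENNReal.ofReal |Fj j (wsc d φ n (latPt d n k))|)
        Filter.atTop (nhds 0)) :
    Filter.Tendsto (fun j => vK d φ (Fj j) n K p) Filter.atTop (nhds 0) := by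
  haveI : Finite {k : Fin d → ℤ // latPt d n k ∈ K} := (latticeFinite d n hK).to_subtype
  unfold vK
  have := ENNReal.Tendsto.const_mul
    (a := twoPow ((d : ℝ) * (n : ℝ) * (2⁻¹ - p⁻¹.toReal)))
    (tendsto_lpS_zero hp (f := fun j (v : {k : Fin d → ℤ // latPt d n k ∈ K})
      => ENNReal.ofReal |Fj j (wsc d φ n (latPt d n v.1))|)
      (fun v => hc v.1 v.2)) (Or.inr (twoPow_ne_top _))
  simpa using this

end Stmt10Aux4
section Stmt10Aux5

variable {d : ℕ} {φ : (Fin d → ℝ) → ℝ} {ψ : Fin (2 ^ d - 1) → (Fin d → ℝ) → ℝ}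
variable {p q : ℝ≥0∞} {K : Set (Fin d → ℝ)} {U : Set (Fin d → ℝ)} {R : ℝ}

theorem adapted_singleton {k₀ n : ℕ} (hR : 0 < R) (hA : Adapted d U R K k₀)
    {x : Fin d → ℝ} (hx : x ∈ K) (hn : k₀ ≤ n) : Adapted d U R {x} n := by
  obtain ⟨hKc, hKU, hdist⟩ := hA
  refine ⟨isCompact_singleton, Set.singleton_subset_iff.2 (hKU hx), ?_⟩
  intro z hz y hy
  rw [Set.mem_singleton_iff] at hz
  subst hz
  refine lt_of_le_of_lt ?_ (hdist z hx y hy)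
  have : (2:ℝ) ^ (-(n:ℤ)) ≤ (2:ℝ) ^ (-(k₀:ℤ)) :=
    zpow_le_zpow_right₀ one_le_two (by exact_mod_cast neg_le_neg (by exact_mod_cast hn))
  exact mul_le_mul_of_nonneg_right this hR.le

/-- the countable dominating family of compacts. -/
def Kdom (d : ℕ) (U : Set (Fin d → ℝ)) (R : ℝ) (m k : ℕ) : Set (Fin d → ℝ) :=
  Metric.closedBall 0 m ∩
    {x | ∀ y ∉ U, (1 + 1 / ((m : ℝ) + 1)) * ((2 : ℝ) ^ (-(k : ℤ)) * R) ≤ dist x y}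

theorem adapted_Kdom (hR : 0 < R) (m k : ℕ) : Adapted d U R (Kdom d U R m k) k := by
  have hc : (0:ℝ) < (2 : ℝ) ^ (-(k : ℤ)) * R := mul_pos (zpow_pos two_pos _) hR
  have hm1 : (0:ℝ) < 1 / ((m : ℝ) + 1) := by positivity
  have hlt : (2 : ℝ) ^ (-(k : ℤ)) * R < (1 + 1 / ((m : ℝ) + 1)) * ((2 : ℝ) ^ (-(k : ℤ)) * R) := by
    nlinarith
  have hsub : Kdom d U R m k ⊆ U := by
    intro x hx
    by_contra hxU
    have := hx.2 x hxU
    rw [dist_self] at this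
    nlinarith
  refine ⟨?_, hsub, ?_⟩
  · refine Metric.isCompact_of_isClosed_isBounded ?_
      (Metric.isBounded_closedBall.subset Set.inter_subset_left)
    refine IsClosed.inter Metric.isClosed_closedBall ?_
    have : {x : Fin d → ℝ | ∀ y ∉ U, (1 + 1 / ((m : ℝ) + 1)) * ((2 : ℝ) ^ (-(k : ℤ)) * R) ≤ dist x y}
        = ⋂ y ∈ Uᶜ, {x | (1 + 1 / ((m : ℝ) + 1)) * ((2 : ℝ) ^ (-(k : ℤ)) * R) ≤ dist x y} := by
      ext x; simp [Set.mem_iInter, Set.mem_compl_iff]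
    rw [this]
    exact isClosed_biInter fun y _ =>
      isClosed_le continuous_const (continuous_id.dist continuous_const)
  · intro x hx y hy
    exact lt_of_lt_of_le hlt (hx.2 y hy)

theorem exists_Kdom_superset (hR : 0 < R) (hU : IsOpen U) {k : ℕ}
    (hA : Adapted d U R K k) : ∃ m : ℕ, K ⊆ Kdom d U R m k := by
  obtain ⟨hKc, hKU, hdist⟩ := hA
  rcases K.eq_empty_or_nonempty with rfl | hKne
  · exact ⟨0, Set.empty_subset _⟩
  set c : ℝ := (2 : ℝ) ^ (-(k : ℤ)) * R with hc
  have hcpos : 0 < c := mul_pos (zpow_pos two_pos _) hR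
  obtain ⟨C, hC⟩ := (Metric.isBounded_iff_subset_closedBall 0).1 hKc.isBounded
  obtain ⟨m₂, hm₂⟩ := exists_nat_ge C
  rcases Set.eq_empty_or_nonempty Uᶜ with hUc | hUc
  · refine ⟨m₂, fun x hx => ⟨Metric.closedBall_subset_closedBall hm₂ (hC hx), ?_⟩⟩
    intro y hy
    exact absurd (Set.eq_empty_iff_forall_notMem.1 hUc y) (fun h => h hy)
  · -- U^c nonempty closed
    have hUcc : IsClosed Uᶜ := hU.isClosed_compl
    have hinf : ∀ x ∈ K, c < Metric.infDist x Uᶜ := by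
      intro x hx
      obtain ⟨y, hyUc, hxy⟩ := hUcc.exists_infDist_eq_dist hUc x
      rw [hxy]
      exact hdist x hx y hyUc
    obtain ⟨x₀, hx₀K, hmin⟩ := hKc.exists_isMinOn hKne
      ((Metric.continuous_infDist_pt Uᶜ).continuousOn)
    set δ : ℝ := Metric.infDist x₀ Uᶜ
    have hδ : c < δ := hinf x₀ hx₀K
    obtain ⟨m₁, hm₁⟩ := exists_nat_ge (c / (δ - c))
    have hmargin : ∀ m : ℕ, m₁ ≤ m → (1 + 1 / ((m : ℝ) + 1)) * c ≤ δ := by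
      intro m hm
      have h1 : (0:ℝ) < (m : ℝ) + 1 := by positivity
      have h2 : c / (δ - c) ≤ (m : ℝ) + 1 := by
        calc c / (δ - c) ≤ (m₁ : ℝ) := hm₁
          _ ≤ (m : ℝ) := by exact_mod_cast hm
          _ ≤ (m : ℝ) + 1 := by linarith
      have h3 : c / ((m : ℝ) + 1) ≤ δ - c := by
        rw [div_le_iff₀ h1]
        rw [div_le_iff₀ (by linarith : (0:ℝ) < δ - c)] at h2
        linarith
      have heq : (1 + 1 / ((m : ℝ) + 1)) * c = c + c / ((m : ℝ) + 1) := by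
        field_simp
      rw [heq]
      linarith
    refine ⟨max m₁ m₂, fun x hx => ⟨?_, ?_⟩⟩
    · refine Metric.closedBall_subset_closedBall ?_ (hC hx)
      calc C ≤ (m₂ : ℝ) := hm₂
        _ ≤ ((max m₁ m₂ : ℕ) : ℝ) := by exact_mod_cast le_max_right m₁ m₂
    · intro y hy
      calc (1 + 1 / (((max m₁ m₂ : ℕ) : ℝ) + 1)) * c ≤ δ :=
            hmargin _ (le_max_left m₁ m₂)
        _ ≤ Metric.infDist x Uᶜ := hmin hx
        _ ≤ dist x y := Metric.infDist_le_dist_of_mem hy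
end Stmt10Aux5
section Stmt10Aux6

variable {d : ℕ} {φ : (Fin d → ℝ) → ℝ} {ψ : Fin (2 ^ d - 1) → (Fin d → ℝ) → ℝ}
variable {p q s : ℝ≥0∞} {K K' : Set (Fin d → ℝ)}

theorem vK_mono_K {n : ℤ} (hKK' : K ⊆ K') (F : ((Fin d → ℝ) → ℝ) → ℝ) :
    vK d φ F n K p ≤ vK d φ F n K' p := by
  unfold vK
  refine mul_le_mul_right ?_ _
  exact lpS_le_of_inj
    (fun x : {k : Fin d → ℤ // latPt d n k ∈ K} =>
      (⟨x.1, hKK' x.2⟩ : {k : Fin d → ℤ // latPt d n k ∈ K'}))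
    (fun a b hab => by
      simp only [Subtype.mk.injEq] at hab
      exact Subtype.ext hab) (fun i => le_rfl)

theorem wK_mono_K {n : ℤ} (hKK' : K ⊆ K') (F : ((Fin d → ℝ) → ℝ) → ℝ) :
    wK d ψ F n K p ≤ wK d ψ F n K' p := by
  unfold wK
  refine mul_le_mul_right ?_ _
  exact lpS_le_of_inj
    (fun x : Fin (2 ^ d - 1) × {k : Fin d → ℤ // latPt d n k ∈ K} =>
      ((x.1, ⟨x.2.1, hKK' x.2.2⟩) : Fin (2 ^ d - 1) × {k : Fin d → ℤ // latPt d n k ∈ K'}))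
    (fun a b hab => by
      simp only [Prod.mk.injEq, Subtype.mk.injEq] at hab
      exact Prod.ext hab.1 (Subtype.ext hab.2))
    (fun i => le_rfl)

theorem locNorm_mono_K {α : ℝ} {k : ℕ} (hKK' : K ⊆ K') (F : ((Fin d → ℝ) → ℝ) → ℝ) :
    locNorm d φ ψ α K k p q F ≤ locNorm d φ ψ α K' k p q F := by
  unfold locNorm
  refine add_le_add (vK_mono_K hKK' F) (lpS_mono fun n => ?_)
  exact mul_le_mul_right (wK_mono_K hKK' F) _

/-- term-by-term bound of the weighted wavelet norm by the local norm. -/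
theorem term_le_locNorm {α' : ℝ} {k : ℕ} (hq : 1 ≤ q) (F : ((Fin d → ℝ) → ℝ) → ℝ)
    {n : ℕ} (hn : k ≤ n) :
    twoPow (α' * n) * wK d ψ F n K p ≤ locNorm d φ ψ α' K k p q F := by
  calc twoPow (α' * n) * wK d ψ F n K p
      ≤ lpS q (fun m : {m : ℕ // k ≤ m} => twoPow (α' * (m : ℕ)) * wK d ψ F m K p) := by
        have h := le_lpS hq
          (fun m : {m : ℕ // k ≤ m} => twoPow (α' * (m : ℕ)) * wK d ψ F m K p) ⟨n, hn⟩
        simpa using h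
    _ ≤ _ := lpSq_le_locNorm F

/-- the embedding `B^{α'}_{p,q} ⊆ B^{α}_{p,s}` at the level of local norms. -/
theorem locNorm_embed {α α' : ℝ} (hαα' : α < α') {k : ℕ} (hq : 1 ≤ q) (hs : 1 ≤ s)
    (F : ((Fin d → ℝ) → ℝ) → ℝ) :
    locNorm d φ ψ α K k p s F ≤
      (1 + lpS s (fun n : ℕ => twoPow ((α - α') * n))) * locNorm d φ ψ α' K k p q F := by
  set L := locNorm d φ ψ α' K k p q F with hL
  set Cg := lpS s (fun n : ℕ => twoPow ((α - α') * n)) with hCg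
  have hstep : lpS s (fun n : {n : ℕ // k ≤ n} => twoPow (α * (n : ℕ)) * wK d ψ F n K p)
      ≤ Cg * L := by
    calc lpS s (fun n : {n : ℕ // k ≤ n} => twoPow (α * (n : ℕ)) * wK d ψ F n K p)
        ≤ lpS s (fun n : {n : ℕ // k ≤ n} => twoPow ((α - α') * (n : ℕ)) * L) := by
          refine lpS_mono fun n => ?_
          have heq : twoPow (α * ((n : ℕ) : ℝ)) =
              twoPow ((α - α') * ((n : ℕ) : ℝ)) * twoPow (α' * ((n : ℕ) : ℝ)) := by
            rw [← twoPow_add]; ring_nf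
          rw [heq, mul_assoc]
          exact mul_le_mul_right (term_le_locNorm hq F n.2) _
      _ = lpS s (fun n : {n : ℕ // k ≤ n} => L * twoPow ((α - α') * (n : ℕ))) := by
          congr 1; funext n; rw [mul_comm]
      _ = L * lpS s (fun n : {n : ℕ // k ≤ n} => twoPow ((α - α') * (n : ℕ))) :=
          lpS_const_mul hs L _
      _ ≤ L * Cg := by
          refine mul_le_mul_right ?_ _
          exact lpS_le_of_inj (fun n : {n : ℕ // k ≤ n} => (n : ℕ))
            (fun a b hab => Subtype.ext hab) (fun i => le_rfl)
      _ = Cg * L := mul_comm _ _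
  calc locNorm d φ ψ α K k p s F
      = vK d φ F k K p +
        lpS s (fun n : {n : ℕ // k ≤ n} => twoPow (α * (n : ℕ)) * wK d ψ F n K p) := rfl
    _ ≤ L + Cg * L := add_le_add (vK_le_locNorm F) hstep
    _ = (1 + Cg) * L := by rw [add_mul, one_mul]

end Stmt10Aux6
section Stmt10Aux7

variable {d : ℕ} {φ : (Fin d → ℝ) → ℝ} {ψ : Fin (2 ^ d - 1) → (Fin d → ℝ) → ℝ}
variable {p q s : ℝ≥0∞} {K : Set (Fin d → ℝ)}

/-- The core convergence statement: if the coefficients of `v j - G` on `K` tend to `0`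
and the `v j` are uniformly bounded in the `(α',q)`-seminorm, then `v j → G` in the
`(α,s)`-seminorm, for `α < α'`. -/
theorem locNorm_sub_tendsto_zero {α α' : ℝ} (hαα' : α < α')
    (hp : 1 ≤ p) (hq : 1 ≤ q) (hs : 1 ≤ s) {k₀ : ℕ} (hK : IsCompact K)
    {v : ℕ → ((Fin d → ℝ) → ℝ) → ℝ} {G : ((Fin d → ℝ) → ℝ) → ℝ}
    (M : ℝ≥0∞) (hM : M ≠ ⊤)
    (hbdd : ∀ j, locNorm d φ ψ α' K k₀ p q (v j) ≤ M)
    (hcV : ∀ k : Fin d → ℤ, latPt d (k₀ : ℤ) k ∈ K →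
      Filter.Tendsto (fun j => ENNReal.ofReal
        |subForm d (v j) G (wsc d φ k₀ (latPt d k₀ k))|) Filter.atTop (nhds 0))
    (hcW : ∀ n : ℕ, k₀ ≤ n → ∀ (i : Fin (2 ^ d - 1)) (k : Fin d → ℤ),
      latPt d (n : ℤ) k ∈ K →
      Filter.Tendsto (fun j => ENNReal.ofReal
        |subForm d (v j) G (wsc d (ψ i) n (latPt d n k))|) Filter.atTop (nhds 0)) :
    Filter.Tendsto (fun j => locNorm d φ ψ α K k₀ p s (subForm d (v j) G))
      Filter.atTop (nhds 0) := by
  set c : ℝ := α - α' with hc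
  have hcneg : c < 0 := by simp [hc]; linarith
  set F : ℕ → ((Fin d → ℝ) → ℝ) → ℝ := fun j => subForm d (v j) G with hF
  -- level-wise convergence of the wavelet seminorms of the difference
  have hwK0 : ∀ n : ℕ, k₀ ≤ n →
      Filter.Tendsto (fun j => wK d ψ (F j) n K p) Filter.atTop (nhds 0) :=
    fun n hn => wK_tendsto_zero hp hK (hcW n hn)
  -- uniform level bounds
  have hwKv : ∀ (j : ℕ) (n : ℕ), k₀ ≤ n →
      wK d ψ (v j) n K p ≤ twoPow (-(α' * n)) * M :=
    fun j n hn => (wK_le_locNorm hq (v j) hn).trans (mul_le_mul_right (hbdd j) _)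
  have hwKG : ∀ n : ℕ, k₀ ≤ n → wK d ψ G n K p ≤ twoPow (-(α' * n)) * M := by
    intro n hn
    refine ENNReal.le_of_forall_pos_le_add fun ε hε _ => ?_
    obtain ⟨J, hJ⟩ := ENNReal.tendsto_atTop_zero.mp (hwK0 n hn) (ε : ℝ≥0∞)
      (ENNReal.coe_pos.2 hε)
    calc wK d ψ G n K p ≤ wK d ψ (v J) n K p + wK d ψ (F J) n K p :=
          wK_le_add hp (fun η => abs_le_abs_add_subForm (v J) G η)
      _ ≤ twoPow (-(α' * n)) * M + (ε : ℝ≥0∞) :=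
          add_le_add (hwKv J n hn) (hJ J le_rfl)
  -- tail bound for the difference
  have htail : ∀ (j : ℕ) (n : ℕ), k₀ ≤ n →
      twoPow (α * n) * wK d ψ (F j) n K p ≤ twoPow (c * n) * (2 * M) := by
    intro j n hn
    have h1 : wK d ψ (F j) n K p ≤ twoPow (-(α' * n)) * (2 * M) := by
      have h2 : wK d ψ (F j) n K p ≤ wK d ψ (v j) n K p + wK d ψ G n K p := by
        refine wK_le_add hp fun η => ?_
        show |v j η - G η| ≤ |v j η| + |G η|
        exact abs_sub _ _
      calc wK d ψ (F j) n K p ≤ twoPow (-(α' * n)) * M + twoPow (-(α' * n)) * M :=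
            h2.trans (add_le_add (hwKv j n hn) (hwKG n hn))
        _ = twoPow (-(α' * n)) * (2 * M) := by ring
    calc twoPow (α * n) * wK d ψ (F j) n K p
        ≤ twoPow (α * n) * (twoPow (-(α' * n)) * (2 * M)) := mul_le_mul_right h1 _
      _ = (twoPow (α * n) * twoPow (-(α' * n))) * (2 * M) := by ring
      _ = twoPow (c * n) * (2 * M) := by
          rw [← twoPow_add]
          congr 2
          ring
  -- now the ε-argument
  rw [ENNReal.tendsto_atTop_zero]
  intro ε hε
  have hε2 : (0 : ℝ≥0∞) < ε / 2 := ENNReal.half_pos hε.ne'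
  have hε1 : (0 : ℝ≥0∞) < ε / 2 / 2 := ENNReal.half_pos hε2.ne'
  set CgFull := lpS s (fun m : ℕ => twoPow (c * m)) with hCgFull
  have hCgne : CgFull ≠ ⊤ := lpS_geometric_ne_top hcneg hs
  have h2M : (2 : ℝ≥0∞) * M ≠ ⊤ := ENNReal.mul_ne_top (by norm_num) hM
  -- choose the cut-off N
  have hTB : Filter.Tendsto (fun N : ℕ => twoPow (c * N) * (2 * M * CgFull))
      Filter.atTop (nhds 0) := by
    have := ENNReal.Tendsto.mul_const (tendsto_twoPow_atTop_zero hcneg)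
      (b := 2 * M * CgFull) (Or.inr (ENNReal.mul_ne_top h2M hCgne))
    simpa using this
  obtain ⟨N, hN⟩ := ENNReal.tendsto_atTop_zero.mp hTB (ε / 2) hε2.ne'.bot_lt
  -- head convergence
  have hheadt : Filter.Tendsto
      (fun j => ∑ n ∈ Finset.Icc k₀ N, twoPow (α * n) * wK d ψ (F j) n K p)
      Filter.atTop (nhds 0) := by
    have := tendsto_finset_sum (f := fun (n : ℕ) (j : ℕ) =>
        twoPow (α * n) * wK d ψ (F j) n K p) (a := fun _ => (0 : ℝ≥0∞))
      (Finset.Icc k₀ N) (fun n hn => by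
        have := ENNReal.Tendsto.const_mul (a := twoPow (α * n))
          (hwK0 n (Finset.mem_Icc.mp hn).1) (Or.inr (twoPow_ne_top _))
        simpa using this)
    simpa using this
  obtain ⟨J₁, hJ₁⟩ := ENNReal.tendsto_atTop_zero.mp hheadt (ε / 2 / 2) hε1
  -- scaling part convergence
  have hvKt : Filter.Tendsto (fun j => vK d φ (F j) k₀ K p) Filter.atTop (nhds 0) :=
    vK_tendsto_zero hp hK hcV
  obtain ⟨J₂, hJ₂⟩ := ENNReal.tendsto_atTop_zero.mp hvKt (ε / 2 / 2) hε1
  refine ⟨max J₁ J₂, fun j hj => ?_⟩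
  -- split the sum over levels at N
  have hsplit : lpS s (fun n : {n : ℕ // k₀ ≤ n} => twoPow (α * (n : ℕ)) * wK d ψ (F j) n K p)
      ≤ lpS s (fun n : {n : ℕ // k₀ ≤ n} =>
          if (n : ℕ) ≤ N then twoPow (α * (n : ℕ)) * wK d ψ (F j) n K p else 0) +
        lpS s (fun n : {n : ℕ // k₀ ≤ n} =>
          if (n : ℕ) ≤ N then 0 else twoPow (α * (n : ℕ)) * wK d ψ (F j) n K p) := by
    have heq : (fun n : {n : ℕ // k₀ ≤ n} => twoPow (α * (n : ℕ)) * wK d ψ (F j) n K p)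
        = fun n : {n : ℕ // k₀ ≤ n} =>
          (if (n : ℕ) ≤ N then twoPow (α * (n : ℕ)) * wK d ψ (F j) n K p else 0) +
          (if (n : ℕ) ≤ N then 0 else twoPow (α * (n : ℕ)) * wK d ψ (F j) n K p) := by
      funext n
      split_ifs <;> simp
    rw [heq]
    exact lpS_add_le hs _ _
  -- head estimate
  have hhead : lpS s (fun n : {n : ℕ // k₀ ≤ n} =>
      if (n : ℕ) ≤ N then twoPow (α * (n : ℕ)) * wK d ψ (F j) n K p else 0)
      ≤ ∑ n ∈ Finset.Icc k₀ N, twoPow (α * n) * wK d ψ (F j) n K p := by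
    set A : ℕ → ℝ≥0∞ := fun n =>
      if k₀ ≤ n ∧ n ≤ N then twoPow (α * n) * wK d ψ (F j) n K p else 0 with hA
    calc lpS s (fun n : {n : ℕ // k₀ ≤ n} =>
          if (n : ℕ) ≤ N then twoPow (α * (n : ℕ)) * wK d ψ (F j) n K p else 0)
        ≤ ∑' n : {n : ℕ // k₀ ≤ n},
          (if (n : ℕ) ≤ N then twoPow (α * (n : ℕ)) * wK d ψ (F j) n K p else 0) :=
          lpS_le_tsum hs _
      _ ≤ ∑' n : {n : ℕ // k₀ ≤ n}, A (n : ℕ) := by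
          refine ENNReal.tsum_le_tsum fun n => ?_
          simp only [hA]
          split_ifs with h1 h2 h2 <;> first | rfl | exact zero_le | exact absurd ⟨n.2, h1⟩ h2
      _ ≤ ∑' n : ℕ, A n := tsum_comp_le_tsum_of_injective Subtype.val_injective A
      _ = ∑ n ∈ Finset.Icc k₀ N, A n := by
          refine tsum_eq_sum fun b hb => ?_
          simp only [hA, Finset.mem_Icc] at hb ⊢
          exact if_neg hb
      _ = ∑ n ∈ Finset.Icc k₀ N, twoPow (α * n) * wK d ψ (F j) n K p := by
          refine Finset.sum_congr rfl fun n hn => ?_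
          simp only [hA]
          exact if_pos (Finset.mem_Icc.mp hn)
  -- tail estimate
  have htailest : lpS s (fun n : {n : ℕ // k₀ ≤ n} =>
      if (n : ℕ) ≤ N then 0 else twoPow (α * (n : ℕ)) * wK d ψ (F j) n K p)
      ≤ twoPow (c * N) * (2 * M * CgFull) := by
    set g2 : ℕ → ℝ≥0∞ := fun n => if n ≤ N then 0 else twoPow (c * n) * (2 * M) with hg2
    have step1 : lpS s (fun n : {n : ℕ // k₀ ≤ n} =>
        if (n : ℕ) ≤ N then 0 else twoPow (α * (n : ℕ)) * wK d ψ (F j) n K p)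
        ≤ lpS s g2 := by
      refine lpS_le_of_inj (fun n : {n : ℕ // k₀ ≤ n} => (n : ℕ))
        (fun a b hab => Subtype.ext hab) (fun n => ?_)
      simp only [hg2]
      split_ifs with h
      · exact le_rfl
      · exact htail j n n.2
    have step2 : lpS s g2 ≤ lpS s (fun x : {n : ℕ // N + 1 ≤ n} => g2 x) := by
      have := lpS_le_subtype (p := s) hs g2 {n : ℕ | N + 1 ≤ n} (fun n hn => by
        simp only [hg2] at hn
        by_contra hcon
        simp only [Set.mem_setOf_eq, not_le] at hcon
        exact hn (if_pos (by omega)))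
      exact this
    have step3 : lpS s (fun x : {n : ℕ // N + 1 ≤ n} => g2 x)
        ≤ (2 * M) * lpS s (fun x : {n : ℕ // N + 1 ≤ n} => twoPow (c * (x : ℕ))) := by
      rw [← lpS_const_mul hs]
      refine lpS_mono fun x => ?_
      simp only [hg2]
      rw [if_neg (by omega : ¬ (x : ℕ) ≤ N)]
      rw [mul_comm]
    have step4 : lpS s (fun x : {n : ℕ // N + 1 ≤ n} => twoPow (c * (x : ℕ)))
        ≤ twoPow (c * (N + 1 : ℕ)) * CgFull := lpS_tail_le hs (N + 1)
    calc lpS s (fun n : {n : ℕ // k₀ ≤ n} =>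
          if (n : ℕ) ≤ N then 0 else twoPow (α * (n : ℕ)) * wK d ψ (F j) n K p)
        ≤ (2 * M) * (twoPow (c * (N + 1 : ℕ)) * CgFull) :=
          step1.trans (step2.trans (step3.trans (mul_le_mul_right step4 _)))
      _ ≤ (2 * M) * (twoPow (c * N) * CgFull) := by
          refine mul_le_mul_right (mul_le_mul_left (twoPow_le_twoPow ?_) _) _
          push_cast
          nlinarith
      _ = twoPow (c * N) * (2 * M * CgFull) := by ring
  -- put everything together
  calc locNorm d φ ψ α K k₀ p s (F j)
      = vK d φ (F j) k₀ K p +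
        lpS s (fun n : {n : ℕ // k₀ ≤ n} => twoPow (α * (n : ℕ)) * wK d ψ (F j) n K p) := rfl
    _ ≤ ε / 2 / 2 + (ε / 2 / 2 + ε / 2) := by
        refine add_le_add (hJ₂ j (le_of_max_le_right hj)) ?_
        refine hsplit.trans (add_le_add (hhead.trans (hJ₁ j (le_of_max_le_left hj)))
          (htailest.trans (hN N le_rfl)))
    _ = ε := by rw [← add_assoc, ENNReal.add_halves, ENNReal.add_halves]

end Stmt10Aux7

/-- Proposition 2.25, compact embedding. For `α < α'` (with
`|α|, |α'| < r`) and `p, q, s ∈ [1,∞]`, the embedding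
`B^{α',loc}_{p,q}(U) ⊆ B^{α,loc}_{p,s}(U)` is compact: every bounded sequence of
`B^{α',loc}_{p,q}(U)` has a subsequence converging in `B^{α,loc}_{p,s}(U)`. -/
theorem stmt10
    (d r : ℕ) (hd : 1 ≤ d) (R : ℝ) (hR : 0 < R)
    -- the compactly supported wavelet basis of regularity r
    (φ : (Fin d → ℝ) → ℝ) (ψ : Fin (2 ^ d - 1) → (Fin d → ℝ) → ℝ)
    (hφreg : ContDiff ℝ (r : ℕ∞) φ) (hψreg : ∀ i, ContDiff ℝ (r : ℕ∞) (ψ i))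
    (hφsupp : tsupport φ ⊆ Metric.ball 0 R) (hψsupp : ∀ i, tsupport (ψ i) ⊆ Metric.ball 0 R)
    (horthφ : ∀ k k' : Fin d → ℤ,
      (∫ y : Fin d → ℝ, φ (fun j => y j - k j) * φ (fun j => y j - k' j)) =
        if k = k' then 1 else 0)
    (horthψ : ∀ (i i' : Fin (2 ^ d - 1)) (k k' : Fin d → ℤ),
      (∫ y : Fin d → ℝ, ψ i (fun j => y j - k j) * ψ i' (fun j => y j - k' j)) =
        if i = i' ∧ k = k' then 1 else 0)
    (horthφψ : ∀ (i : Fin (2 ^ d - 1)) (k k' : Fin d → ℤ),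
      (∫ y : Fin d → ℝ, φ (fun j => y j - k j) * ψ i (fun j => y j - k' j)) = 0)
    -- the exponents
    (α α' : ℝ) (hαα' : α < α') (hα : |α| < (r : ℝ)) (hα' : |α'| < (r : ℝ))
    (p q s : ℝ≥0∞) (hp : 1 ≤ p) (hq : 1 ≤ q) (hs : 1 ≤ s)
    -- the open set U
    (U : Set (Fin d → ℝ)) (hU : IsOpen U)
    -- a bounded sequence of B^{α',loc}_{p,q}(U)
    (u : ℕ → ((Fin d → ℝ) → ℝ) → ℝ)
    (humem : ∀ j, MemBesovLoc d φ ψ α' p q U R (u j))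
    (hubdd : ∀ K k, Adapted d U R K k →
      ∃ M : ℝ, ∀ j, locNorm d φ ψ α' K k p q (u j) ≤ ENNReal.ofReal M) :
    -- conclusion: a subsequence converges in B^{α,loc}_{p,s}(U)
    ∃ (G : ((Fin d → ℝ) → ℝ) → ℝ) (t : ℕ → ℕ), StrictMono t ∧
      MemBesovLoc d φ ψ α p s U R G ∧
      TendstoLocBesov d φ ψ α p s U R (fun j => u (t j)) G := by
  classical
  -- the countable index of coefficients
  set τ : (ℕ × (Fin d → ℤ)) ⊕ (ℕ × Fin (2 ^ d - 1) × (Fin d → ℤ)) → ((Fin d → ℝ) → ℝ) :=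
    Sum.elim (fun mk => wsc d φ mk.1 (latPt d mk.1 mk.2))
      (fun nik => wsc d (ψ nik.2.1) nik.1 (latPt d nik.1 nik.2.2)) with hτ
  set Good : (ℕ × (Fin d → ℤ)) ⊕ (ℕ × Fin (2 ^ d - 1) × (Fin d → ℤ)) → Prop :=
    Sum.elim (fun mk => Adapted d U R {latPt d mk.1 mk.2} mk.1)
      (fun nik => Adapted d U R {latPt d nik.1 nik.2.2} nik.1) with hGood
  -- uniform bounds on good coefficients
  have hbound : ∀ ι : {ι // Good ι}, ∃ B : ℝ, ∀ j, |u j (τ ι.1)| ≤ B := by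
    rintro ⟨ι, hgood⟩
    cases ι with
    | inl mk =>
      obtain ⟨m, k⟩ := mk
      obtain ⟨M, hM⟩ := hubdd _ _ hgood
      refine ⟨(twoPow (-((d : ℝ) * ((m : ℤ) : ℝ) * (2⁻¹ - p⁻¹.toReal))) *
        ENNReal.ofReal M).toReal, fun j => ?_⟩
      have h1 := coeffV_le_locNorm (K := {latPt d m k}) (φ := φ) (ψ := ψ) (α' := α') (q := q)
        hp (u j) (k := k) rfl
      have h2 := h1.trans (mul_le_mul_right (hM j) _)
      exact (ENNReal.ofReal_le_iff_le_toReal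
        (ENNReal.mul_ne_top (twoPow_ne_top _) ENNReal.ofReal_ne_top)).1 h2
    | inr nik =>
      obtain ⟨n, i, k⟩ := nik
      obtain ⟨M, hM⟩ := hubdd _ _ hgood
      refine ⟨(twoPow (-((d : ℝ) * ((n : ℤ) : ℝ) * (2⁻¹ - p⁻¹.toReal))) *
        (twoPow (-(α' * n)) * ENNReal.ofReal M)).toReal, fun j => ?_⟩
      have h1 := coeffW_le_locNorm (K := {latPt d n k}) (φ := φ) (ψ := ψ) (α' := α') (q := q)
        hp hq (u j) (le_refl n) i (k := k) rfl
      have h2 := h1.trans (mul_le_mul_right (mul_le_mul_right (hM j) _) _)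
      exact (ENNReal.ofReal_le_iff_le_toReal
        (ENNReal.mul_ne_top (twoPow_ne_top _)
          (ENNReal.mul_ne_top (twoPow_ne_top _) ENNReal.ofReal_ne_top))).1 h2
  choose B hB using hbound
  -- extraction of a subsequence by sequential compactness of a product of intervals
  have hScompact : IsCompact (Set.univ.pi fun ι : {ι // Good ι} =>
      Set.Icc (-(B ι)) (B ι)) := isCompact_univ_pi fun ι => isCompact_Icc
  have hmem : ∀ j, (fun ι : {ι // Good ι} => u j (τ ι.1)) ∈
      (Set.univ.pi fun ι : {ι // Good ι} => Set.Icc (-(B ι)) (B ι)) := by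
    intro j
    rw [Set.mem_univ_pi]
    intro ι
    exact Set.mem_Icc.2 (abs_le.1 (hB ι j))
  obtain ⟨y, -, t, hts, hconv⟩ := hScompact.isSeqCompact hmem
  have hcoord : ∀ ι : {ι // Good ι},
      Filter.Tendsto (fun j => u (t j) (τ ι.1)) Filter.atTop (nhds (y ι)) :=
    fun ι => tendsto_pi_nhds.1 hconv ι
  -- the limit form
  set G : ((Fin d → ℝ) → ℝ) → ℝ := fun η => limUnder Filter.atTop
    (fun j => u (t j) η) with hGdef
  have hGτ : ∀ ι : {ι // Good ι}, G (τ ι.1) = y ι := fun ι => (hcoord ι).limUnder_eq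
  have hdiff : ∀ ι : {ι // Good ι},
      Filter.Tendsto (fun j => ENNReal.ofReal |u (t j) (τ ι.1) - G (τ ι.1)|)
        Filter.atTop (nhds 0) := by
    intro ι
    have h1 : Filter.Tendsto (fun j => u (t j) (τ ι.1) - G (τ ι.1))
        Filter.atTop (nhds 0) := by
      rw [hGτ]
      simpa using (hcoord ι).sub (tendsto_const_nhds (x := y ι))
    have h2 := h1.abs
    rw [abs_zero] at h2
    have h3 := ENNReal.tendsto_ofReal h2
    rwa [ENNReal.ofReal_zero] at h3
  -- coefficient convergence on any adapted pair
  have hcV' : ∀ (K : Set (Fin d → ℝ)) (k₀ : ℕ), Adapted d U R K k₀ →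
      ∀ k : Fin d → ℤ, latPt d (k₀ : ℤ) k ∈ K →
      Filter.Tendsto (fun j => ENNReal.ofReal
        |subForm d (u (t j)) G (wsc d φ k₀ (latPt d k₀ k))|) Filter.atTop (nhds 0) := by
    intro K k₀ hA k hk
    have hgood : Good (Sum.inl (k₀, k)) := adapted_singleton hR hA hk le_rfl
    exact hdiff ⟨Sum.inl (k₀, k), hgood⟩
  have hcW' : ∀ (K : Set (Fin d → ℝ)) (k₀ : ℕ), Adapted d U R K k₀ →
      ∀ n : ℕ, k₀ ≤ n → ∀ (i : Fin (2 ^ d - 1)) (k : Fin d → ℤ), latPt d (n : ℤ) k ∈ K →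
      Filter.Tendsto (fun j => ENNReal.ofReal
        |subForm d (u (t j)) G (wsc d (ψ i) n (latPt d n k))|) Filter.atTop (nhds 0) := by
    intro K k₀ hA n hn i k hk
    have hgood : Good (Sum.inr (n, i, k)) := adapted_singleton hR hA hk hn
    exact hdiff ⟨Sum.inr (n, i, k), hgood⟩
  -- part (b): convergence of the subsequence to G
  have hMain : TendstoLocBesov d φ ψ α p s U R (fun j => u (t j)) G := by
    intro K k₀ hA
    obtain ⟨M, hM⟩ := hubdd K k₀ hA
    exact locNorm_sub_tendsto_zero hαα' hp hq hs hA.1 (ENNReal.ofReal M)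
      ENNReal.ofReal_ne_top (fun j => hM (t j)) (hcV' K k₀ hA) (hcW' K k₀ hA)
  -- part (a): G belongs to the local Besov space
  choose gm hgm1 hgm2 using humem
  have hNsel : ∀ j : ℕ, ∃ N : ℕ, ∀ mk ∈ Finset.range j ×ˢ Finset.range j,
      locNorm d φ ψ α' (Kdom d U R mk.1 mk.2) mk.2 p q
        (subForm d (pairOn d U (gm (t j) N)) (u (t j))) ≤ ((j : ℝ≥0∞) + 1)⁻¹ := by
    intro j
    have hev : ∀ mk ∈ Finset.range j ×ˢ Finset.range j, ∀ᶠ N in Filter.atTop,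
        locNorm d φ ψ α' (Kdom d U R mk.1 mk.2) mk.2 p q
          (subForm d (pairOn d U (gm (t j) N)) (u (t j))) ≤ ((j : ℝ≥0∞) + 1)⁻¹ := by
      intro mk _
      have htd := hgm2 (t j) (Kdom d U R mk.1 mk.2) mk.2 (adapted_Kdom hR mk.1 mk.2)
      obtain ⟨N₀, hN₀⟩ := ENNReal.tendsto_atTop_zero.mp htd ((j : ℝ≥0∞) + 1)⁻¹
        (ENNReal.inv_pos.2 (by simp))
      exact Filter.eventually_atTop.2 ⟨N₀, hN₀⟩
    exact ((Filter.eventually_all_finset _).2 hev).exists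
  choose Nsel hNsel2 using hNsel
  refine ⟨G, t, hts, ⟨fun j => gm (t j) (Nsel j), fun j => hgm1 (t j) (Nsel j), ?_⟩, hMain⟩
  -- the diagonal sequence converges to G in all (α, s) seminorms
  intro K k₀ hA
  obtain ⟨m₀, hm₀⟩ := exists_Kdom_superset hR hU hA
  set Cg := lpS s (fun n : ℕ => twoPow ((α - α') * n)) with hCgdef
  have hCgne : (1 : ℝ≥0∞) + Cg ≠ ⊤ := by
    rw [Ne, ENNReal.add_eq_top]
    push_neg
    exact ⟨ENNReal.one_ne_top, lpS_geometric_ne_top (by linarith) hs⟩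
  have hBnd : ∀ j, max m₀ k₀ < j →
      locNorm d φ ψ α K k₀ p s (subForm d (pairOn d U (gm (t j) (Nsel j))) G) ≤
        (1 + Cg) * ((j : ℝ≥0∞) + 1)⁻¹ +
          locNorm d φ ψ α K k₀ p s (subForm d (u (t j)) G) := by
    intro j hj
    refine (locNorm_triangle hp hs _ (u (t j)) _).trans (add_le_add ?_ le_rfl)
    calc locNorm d φ ψ α K k₀ p s (subForm d (pairOn d U (gm (t j) (Nsel j))) (u (t j)))
        ≤ (1 + Cg) * locNorm d φ ψ α' K k₀ p q
            (subForm d (pairOn d U (gm (t j) (Nsel j))) (u (t j))) :=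
          locNorm_embed hαα' hq hs _
      _ ≤ (1 + Cg) * locNorm d φ ψ α' (Kdom d U R m₀ k₀) k₀ p q
            (subForm d (pairOn d U (gm (t j) (Nsel j))) (u (t j))) :=
          mul_le_mul_right (locNorm_mono_K hm₀ _) _
      _ ≤ (1 + Cg) * ((j : ℝ≥0∞) + 1)⁻¹ := by
          refine mul_le_mul_right (hNsel2 j (m₀, k₀) ?_) _
          rw [Finset.mem_product]
          constructor <;> rw [Finset.mem_range] <;> omega
  have hinv : Filter.Tendsto (fun j : ℕ => ((j : ℝ≥0∞) + 1)⁻¹) Filter.atTop (nhds 0) := by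
    refine tendsto_of_tendsto_of_tendsto_of_le_of_le tendsto_const_nhds
      ENNReal.tendsto_inv_nat_nhds_zero (fun j => zero_le) (fun j => ?_)
    exact ENNReal.inv_le_inv.2 le_self_add
  have hz1 : Filter.Tendsto (fun j : ℕ => (1 + Cg) * ((j : ℝ≥0∞) + 1)⁻¹)
      Filter.atTop (nhds 0) := by
    have := ENNReal.Tendsto.const_mul (a := 1 + Cg) hinv (Or.inr hCgne)
    simpa using this
  have hz : Filter.Tendsto (fun j : ℕ => (1 + Cg) * ((j : ℝ≥0∞) + 1)⁻¹ +
      locNorm d φ ψ α K k₀ p s (subForm d (u (t j)) G)) Filter.atTop (nhds 0) := by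
    have := hz1.add (hMain K k₀ hA)
    simpa using this
  refine tendsto_of_tendsto_of_tendsto_of_le_of_le' tendsto_const_nhds hz
    (Filter.Eventually.of_forall fun j => zero_le) ?_
  exact Filter.eventually_atTop.2 ⟨max m₀ k₀ + 1, fun j hj => hBnd j (by omega)⟩

end
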